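/- There exists a decomposition of the complete tripartite graph K_{4,4,4} with parts {1,2,3,4}, {5,6,7,8}, {9,10,11,12} into 7 parallel classes: 4 perfect matchings and 3 classes each consisting of 4 vertex-disjoint paths P_3 covering all 12 vertices. -/

import Mathlib

/-- The edges of a path given by the list of its vertices in order. -/
def pathEdges {V : Type*} [DecidableEq V] (l : List V) : Finset (Sym2 V) :=
  ((l.zip l.tail).map Sym2.mk.uncurry).toFinset

/-- A parallel class of paths on `k` vertices in a graph `G`: a set of lists, each
a path on `k` vertices of `G`, which are vertex-disjoint and cover every vertex. -/
def IsPathClass {V : Type*} (G : SimpleGraph V) (k : ℕ) (C : Finset (List V)) : Prop :=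
  (∀ l ∈ C, l.length = k ∧ l.Nodup ∧ l.Chain' G.Adj) ∧
  ∀ x : V, ∃! l : List V, l ∈ C ∧ x ∈ l

/-- All edges used by a class of paths. -/
def classEdges {V : Type*} [DecidableEq V] (C : Finset (List V)) : Finset (Sym2 V) :=
  C.biUnion pathEdges

/-- A uniformly resolvable `(P₂,P₃,P₄)`-decomposition of `G` into `r` perfect matchings
(parallel classes of `P₂`), `s` parallel classes of `P₃` and `t` parallel classes of `P₄`:
pairwise edge-disjoint classes whose edges together are exactly the edges of `G`. -/
def IsURD {V : Type*} [DecidableEq V] (G : SimpleGraph V) (r s t : ℕ) : Prop :=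
  ∃ F : Fin r ⊕ Fin s ⊕ Fin t → Finset (List V),
    (∀ i, IsPathClass G (Sum.elim (fun _ => 2) (Sum.elim (fun _ => 3) (fun _ => 4)) i) (F i)) ∧
    (∀ i j, i ≠ j → Disjoint (classEdges (F i)) (classEdges (F j))) ∧
    (∀ e, e ∈ G.edgeSet ↔ ∃ i, e ∈ classEdges (F i))

/-- The complete tripartite graph `K_{4,4,4}`: vertices `(part, i)` with `part : Fin 3`,
adjacent iff in different parts. -/
def K444 : SimpleGraph (Fin 3 × Fin 4) := SimpleGraph.comap Prod.fst ⊤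

theorem isPathClass_of {V : Type*} {G : SimpleGraph V} {k : ℕ} {C : Finset (List V)}
    (hpath : ∀ l ∈ C, l.length = k ∧ l.Nodup ∧ l.IsChain G.Adj)
    (hcover : ∀ x, ∃ l ∈ C, x ∈ l ∧ ∀ l' ∈ C, x ∈ l' → l' = l) : IsPathClass G k C :=
  ⟨hpath, fun x => (hcover x).elim fun l ⟨hl, hx, huniq⟩ =>
    ⟨l, ⟨hl, hx⟩, fun l' ⟨hl', hx'⟩ => huniq l' hl' hx'⟩⟩

namespace K444

theorem adj_iff {x y : Fin 3 × Fin 4} : K444.Adj x y ↔ x.1 ≠ y.1 := by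
  simp [K444]

instance : DecidableRel K444.Adj := fun _ _ => decidable_of_iff _ adj_iff.symm

/-- Vertex `n` of the paper, which numbers the vertices `1, …, 12` part by part. -/
def vertex (n : ℕ) : Fin 3 × Fin 4 := (Fin.ofNat 3 ((n - 1) / 4), Fin.ofNat 4 ((n - 1) % 4))

def ofLabels (C : List (List ℕ)) : Finset (List (Fin 3 × Fin 4)) :=
  (C.map (List.map vertex)).toFinset

def matching : Fin 4 → Finset (List (Fin 3 × Fin 4)) :=
  ![ofLabels [[1, 6], [2, 5], [3, 10], [4, 9], [7, 12], [8, 11]],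
    ofLabels [[1, 5], [2, 6], [3, 9], [4, 10], [7, 11], [8, 12]],
    ofLabels [[1, 9], [2, 10], [3, 7], [4, 8], [6, 12], [5, 11]],
    ofLabels [[1, 10], [2, 9], [3, 8], [4, 7], [5, 12], [6, 11]]]

def p3Class : Fin 3 → Finset (List (Fin 3 × Fin 4)) :=
  ![ofLabels [[8, 1, 11], [7, 2, 12], [4, 5, 9], [3, 6, 10]],
    ofLabels [[11, 3, 5], [12, 4, 6], [1, 7, 9], [2, 8, 10]],
    ofLabels [[6, 9, 8], [5, 10, 7], [2, 11, 4], [1, 12, 3]]]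

def resolution : Fin 4 ⊕ Fin 3 ⊕ Fin 0 → Finset (List (Fin 3 × Fin 4)) :=
  Sum.elim matching (Sum.elim p3Class Fin.elim0)

theorem isPathClass_matching (i : Fin 4) : IsPathClass K444 2 (matching i) := by
  refine isPathClass_of ?_ ?_ <;> revert i <;> decide +kernel

theorem isPathClass_p3Class (i : Fin 3) : IsPathClass K444 3 (p3Class i) := by
  refine isPathClass_of ?_ ?_ <;> revert i <;> decide +kernel

theorem disjoint_classEdges_resolution :
    ∀ i j, i ≠ j → Disjoint (classEdges (resolution i)) (classEdges (resolution j)) := by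
  decide +kernel

theorem adj_iff_exists_mem_classEdges_resolution :
    ∀ x y, K444.Adj x y ↔ ∃ i, s(x, y) ∈ classEdges (resolution i) := by
  decide +kernel

end K444

/-- `K_{4,4,4}` admits a uniformly resolvable decomposition into 7 parallel classes:
4 perfect matchings and 3 classes each consisting of 4 vertex-disjoint `P₃`'s. -/
theorem stmt11 : IsURD K444 4 3 0 := by
  refine ⟨K444.resolution, ?_, K444.disjoint_classEdges_resolution, fun e => ?_⟩
  · rintro (i | i | i)
    · exact K444.isPathClass_matching i
    · exact K444.isPathClass_p3Class i
    · exact i.elim0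
  · induction e using Sym2.ind with
    | _ x y => exact K444.adj_iff_exists_mem_classEdges_resolution x y
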